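/- arXiv:2304.07624 — 4 statements merged into one kernel-verified Lean document; each statement's English description precedes it below -/
import Mathlib

section
/- Let (T, <_T) and (L, <_L) be finite trees with R = T ∩ L, such that both orders agree on R and there is l < min(Ht(T), Ht(L)) with R = T|_l = L|_l (the elements of rank < l). Let B = {B_t}_{t ∈ T_l} be a family of branches of L such that B_t ∩ R = {x ∈ T | x <_T t} for each t of rank l in T. Define x <_B y iff: x, y ∈ T and x <_T y; or x, y ∈ L and x <_L y; or there is t ∈ T_l with x ∈ B_t and t ≤_T y. Then (T ∪ L, <_B) is a tree. -/
open Set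

/-- A finite tree: a finite set with an irreflexive transitive relation whose
sets of predecessors are linearly ordered. -/
def IsFinTree {V : Type*} (T : Set V) (lt : V → V → Prop) : Prop :=
  T.Finite ∧ (∀ x y, lt x y → x ∈ T ∧ y ∈ T) ∧ (∀ x, ¬ lt x x) ∧
  (∀ x y z, lt x y → lt y z → lt x z) ∧
  (∀ x y z, lt y x → lt z x → lt y z ∨ y = z ∨ lt z y)

/-- The rank of an element of a finite tree: the number of its predecessors. -/
noncomputable def treeRank {V : Type*} (lt : V → V → Prop) (x : V) : ℕ :=
  {y | lt y x}.ncard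

/-- A branch of a finite tree: a maximal chain. -/
def IsBranch {V : Type*} (L : Set V) (lt : V → V → Prop) (B : Set V) : Prop :=
  B ⊆ L ∧ (∀ x ∈ B, ∀ y ∈ B, x = y ∨ lt x y ∨ lt y x) ∧
  ∀ B', B ⊆ B' → B' ⊆ L →
    (∀ x ∈ B', ∀ y ∈ B', x = y ∨ lt x y ∨ lt y x) → B' = B

/-- the amalgamation `(T ∪ L, <_𝓑)` of two finite trees `T`, `L`
(agreeing on `R = T ∩ L = T|_l = L|_l`) through a family of branches `𝓑 = {B_t}`
of `L` with `B_t ∩ R = {x | x <_T t}` is a tree. -/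
theorem stmt16 {V : Type*} (T L : Set V) (ltT ltL : V → V → Prop)
    (hT : IsFinTree T ltT) (hL : IsFinTree L ltL) (l : ℕ)
    (hagree : ∀ x ∈ T ∩ L, ∀ y ∈ T ∩ L, (ltT x y ↔ ltL x y))
    (hR1 : T ∩ L = {x ∈ T | treeRank ltT x < l})
    (hR2 : T ∩ L = {x ∈ L | treeRank ltL x < l})
    (hHtT : ∃ t ∈ T, treeRank ltT t = l)
    (hHtL : ∃ t ∈ L, treeRank ltL t = l)
    (B : V → Set V)
    (hB : ∀ t ∈ T, treeRank ltT t = l →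
      IsBranch L ltL (B t) ∧ B t ∩ (T ∩ L) = {x | ltT x t}) :
    IsFinTree (T ∪ L)
      (fun x y =>
        (x ∈ T ∧ y ∈ T ∧ ltT x y) ∨ (x ∈ L ∧ y ∈ L ∧ ltL x y) ∨
        (∃ t ∈ T, treeRank ltT t = l ∧ x ∈ B t ∧ (ltT t y ∨ t = y))) := by
  obtain ⟨TFin, Tdom, Tirr, Ttrans, Tlin⟩ := hT
  obtain ⟨LFin, Ldom, Lirr, Ltrans, Llin⟩ := hL
  -- rank is strictly monotone
  have rankT : ∀ x y, ltT x y → treeRank ltT x < treeRank ltT y := by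
    intro x y h
    apply Set.ncard_lt_ncard
    · rw [Set.ssubset_def]
      refine ⟨fun z hz => Ttrans _ _ _ hz h, fun hsub => Tirr x (hsub h)⟩
    · exact TFin.subset fun z hz => (Tdom z y hz).1
  have rankL : ∀ x y, ltL x y → treeRank ltL x < treeRank ltL y := by
    intro x y h
    apply Set.ncard_lt_ncard
    · rw [Set.ssubset_def]
      refine ⟨fun z hz => Ltrans _ _ _ hz h, fun hsub => Lirr x (hsub h)⟩
    · exact LFin.subset fun z hz => (Ldom z y hz).1
  have TtoR : ∀ x ∈ T, treeRank ltT x < l → x ∈ T ∩ L := by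
    intro x hx h; rw [hR1]; exact ⟨hx, h⟩
  have LtoR : ∀ x ∈ L, treeRank ltL x < l → x ∈ T ∩ L := by
    intro x hx h; rw [hR2]; exact ⟨hx, h⟩
  have RrankT : ∀ x ∈ T ∩ L, treeRank ltT x < l := by
    intro x hx; rw [hR1] at hx; exact hx.2
  have RrankL : ∀ x ∈ T ∩ L, treeRank ltL x < l := by
    intro x hx; rw [hR2] at hx; exact hx.2
  have BsubL : ∀ t ∈ T, ∀ (h : treeRank ltT t = l), B t ⊆ L :=
    fun t ht h => ((hB t ht h).1).1
  have Bchain : ∀ t ∈ T, ∀ (h : treeRank ltT t = l),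
      ∀ x ∈ B t, ∀ y ∈ B t, x = y ∨ ltL x y ∨ ltL y x :=
    fun t ht h => ((hB t ht h).1).2.1
  have BtoT : ∀ t ∈ T, ∀ (h : treeRank ltT t = l), ∀ x ∈ B t, x ∈ T → ltT x t := by
    intro t ht h x hx hxT
    have hm : x ∈ B t ∩ (T ∩ L) := ⟨hx, hxT, BsubL t ht h hx⟩
    rw [(hB t ht h).2] at hm; exact hm
  have predB : ∀ t ∈ T, ∀ (h : treeRank ltT t = l), ∀ x, ltT x t → x ∈ B t := by
    intro t ht h x hx
    have hm : x ∈ B t ∩ (T ∩ L) := by rw [(hB t ht h).2]; exact hx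
    exact hm.1
  -- nothing above (or equal to) a rank-l element of T lies in L
  have noBack : ∀ t ∈ T, ∀ (h : treeRank ltT t = l), ∀ y, (ltT t y ∨ t = y) →
      y ∈ L → False := by
    intro t ht h y hty hyL
    have hyT : y ∈ T := by
      rcases hty with h' | rfl
      · exact (Tdom t y h').2
      · exact ht
    have h1 : treeRank ltT y < l := RrankT y ⟨hyT, hyL⟩
    rcases hty with h' | rfl
    · have := rankT t y h'; omega
    · omega
  -- branches are downward closed
  have branchClosed : ∀ t ∈ T, ∀ (h : treeRank ltT t = l),
      ∀ y ∈ B t, ∀ x, ltL x y → x ∈ B t := by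
    intro t ht h y hy x hxy
    obtain ⟨⟨hBsub, hBch, hBmax⟩, hBR⟩ := hB t ht h
    have hxL : x ∈ L := (Ldom x y hxy).1
    have hcmp : ∀ b ∈ B t, x = b ∨ ltL x b ∨ ltL b x := by
      intro b hb
      rcases hBch y hy b hb with rfl | h' | h'
      · exact Or.inr (Or.inl hxy)
      · exact Or.inr (Or.inl (Ltrans _ _ _ hxy h'))
      · rcases Llin y x b hxy h' with h'' | h'' | h''
        · exact Or.inr (Or.inl h'')
        · exact Or.inl h''
        · exact Or.inr (Or.inr h'')
    have hsub' : insert x (B t) ⊆ L := by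
      intro a ha
      rcases Set.mem_insert_iff.mp ha with rfl | ha'
      · exact hxL
      · exact hBsub ha'
    have hch' : ∀ a ∈ insert x (B t), ∀ b ∈ insert x (B t),
        a = b ∨ ltL a b ∨ ltL b a := by
      intro a ha b hb
      rcases Set.mem_insert_iff.mp ha with rfl | ha'
      · rcases Set.mem_insert_iff.mp hb with rfl | hb'
        · exact Or.inl rfl
        · exact hcmp b hb'
      · rcases Set.mem_insert_iff.mp hb with rfl | hb'
        · rcases hcmp a ha' with h' | h' | h'
          · exact Or.inl h'.symm
          · exact Or.inr (Or.inr h')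
          · exact Or.inr (Or.inl h')
        · exact hBch a ha' b hb'
    have heq := hBmax (insert x (B t)) (Set.subset_insert _ _) hsub' hch'
    rw [← heq]; exact Set.mem_insert _ _
  -- descending within R
  have downT : ∀ x y, ltT x y → y ∈ T ∩ L → x ∈ T ∩ L ∧ ltL x y := by
    intro x y h hy
    have hx : x ∈ T ∩ L :=
      TtoR x (Tdom x y h).1 (lt_trans (rankT x y h) (RrankT y hy))
    exact ⟨hx, (hagree x hx y hy).mp h⟩
  have downL : ∀ x y, ltL x y → y ∈ T ∩ L → x ∈ T ∩ L ∧ ltT x y := by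
    intro x y h hy
    have hx : x ∈ T ∩ L :=
      LtoR x (Ldom x y h).1 (lt_trans (rankL x y h) (RrankL y hy))
    exact ⟨hx, (hagree x hx y hy).mpr h⟩
  refine ⟨TFin.union LFin, ?_, ?_, ?_, ?_⟩
  · -- domain
    intro x y h
    rcases h with ⟨hx, hy, _⟩ | ⟨hx, hy, _⟩ | ⟨t, ht, hr, hxB, hty⟩
    · exact ⟨Or.inl hx, Or.inl hy⟩
    · exact ⟨Or.inr hx, Or.inr hy⟩
    · refine ⟨Or.inr (BsubL t ht hr hxB), Or.inl ?_⟩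
      rcases hty with h' | rfl
      · exact (Tdom t y h').2
      · exact ht
  · -- irreflexive
    intro x hx
    rcases hx with ⟨_, _, h⟩ | ⟨_, _, h⟩ | ⟨t, ht, hr, hxB, hta⟩
    · exact Tirr x h
    · exact Lirr x h
    · exact noBack t ht hr x hta (BsubL t ht hr hxB)
  · -- transitive
    intro x y z hxy hyz
    rcases hxy with ⟨hxT, hyT, h1⟩ | ⟨hxL, hyL, h1⟩ | ⟨t, ht, hr, hxB, hty⟩
    · rcases hyz with ⟨_, hzT, h2⟩ | ⟨hyL2, hzL, h2⟩ | ⟨s, hs, hsr, hyB, hsz⟩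
      · exact Or.inl ⟨hxT, hzT, Ttrans _ _ _ h1 h2⟩
      · obtain ⟨hxR, h1'⟩ := downT x y h1 ⟨hyT, hyL2⟩
        exact Or.inr (Or.inl ⟨hxR.2, hzL, Ltrans _ _ _ h1' h2⟩)
      · have hys : ltT y s := BtoT s hs hsr y hyB hyT
        exact Or.inr (Or.inr ⟨s, hs, hsr, predB s hs hsr x (Ttrans _ _ _ h1 hys), hsz⟩)
    · rcases hyz with ⟨hyT, hzT, h2⟩ | ⟨_, hzL, h2⟩ | ⟨s, hs, hsr, hyB, hsz⟩
      · obtain ⟨hxR, h1'⟩ := downL x y h1 ⟨hyT, hyL⟩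
        exact Or.inl ⟨hxR.1, hzT, Ttrans _ _ _ h1' h2⟩
      · exact Or.inr (Or.inl ⟨hxL, hzL, Ltrans _ _ _ h1 h2⟩)
      · exact Or.inr (Or.inr ⟨s, hs, hsr, branchClosed s hs hsr y hyB x h1, hsz⟩)
    · rcases hyz with ⟨hyT, hzT, h2⟩ | ⟨hyL, hzL, h2⟩ | ⟨s, hs, hsr, hyB, hsz⟩
      · have htz : ltT t z := by
          rcases hty with h' | rfl
          · exact Ttrans _ _ _ h' h2
          · exact h2
        exact Or.inr (Or.inr ⟨t, ht, hr, hxB, Or.inl htz⟩)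
      · exact (noBack t ht hr y hty hyL).elim
      · exact (noBack t ht hr y hty (BsubL s hs hsr hyB)).elim
  · -- predecessors linearly ordered
    intro x y z hyx hzx
    rcases hyx with ⟨hyT, hxT, h1⟩ | ⟨hyL, hxL, h1⟩ | ⟨t, ht, hr, hyB, htx⟩
    · rcases hzx with ⟨hzT, _, h2⟩ | ⟨hzL, hxL2, h2⟩ | ⟨s, hs, hsr, hzB, hsx⟩
      · -- (T, T)
        rcases Tlin x y z h1 h2 with h | h | h
        · exact Or.inl (Or.inl ⟨hyT, hzT, h⟩)
        · exact Or.inr (Or.inl h)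
        · exact Or.inr (Or.inr (Or.inl ⟨hzT, hyT, h⟩))
      · -- (T, L)
        obtain ⟨hyR, h1'⟩ := downT y x h1 ⟨hxT, hxL2⟩
        rcases Llin x y z h1' h2 with h | h | h
        · exact Or.inl (Or.inr (Or.inl ⟨hyR.2, hzL, h⟩))
        · exact Or.inr (Or.inl h)
        · exact Or.inr (Or.inr (Or.inr (Or.inl ⟨hzL, hyR.2, h⟩)))
      · -- (T, B)
        rcases hsx with hsx | rfl
        · rcases Tlin x y s h1 hsx with h | h | h
          · have hyB' : y ∈ B s := predB s hs hsr y h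
            rcases Bchain s hs hsr y hyB' z hzB with h' | h' | h'
            · exact Or.inr (Or.inl h')
            · exact Or.inl (Or.inr (Or.inl ⟨BsubL s hs hsr hyB', BsubL s hs hsr hzB, h'⟩))
            · exact Or.inr (Or.inr (Or.inr (Or.inl ⟨BsubL s hs hsr hzB, BsubL s hs hsr hyB', h'⟩)))
          · exact Or.inr (Or.inr (Or.inr (Or.inr ⟨s, hs, hsr, hzB, Or.inr h.symm⟩)))
          · exact Or.inr (Or.inr (Or.inr (Or.inr ⟨s, hs, hsr, hzB, Or.inl h⟩)))
        · have hyB' : y ∈ B s := predB s hs hsr y h1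
          rcases Bchain s hs hsr y hyB' z hzB with h' | h' | h'
          · exact Or.inr (Or.inl h')
          · exact Or.inl (Or.inr (Or.inl ⟨BsubL s hs hsr hyB', BsubL s hs hsr hzB, h'⟩))
          · exact Or.inr (Or.inr (Or.inr (Or.inl ⟨BsubL s hs hsr hzB, BsubL s hs hsr hyB', h'⟩)))
    · rcases hzx with ⟨hzT, hxT, h2⟩ | ⟨hzL, _, h2⟩ | ⟨s, hs, hsr, hzB, hsx⟩
      · -- (L, T)
        obtain ⟨hzR, h2'⟩ := downT z x h2 ⟨hxT, hxL⟩
        rcases Llin x y z h1 h2' with h | h | h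
        · exact Or.inl (Or.inr (Or.inl ⟨hyL, hzR.2, h⟩))
        · exact Or.inr (Or.inl h)
        · exact Or.inr (Or.inr (Or.inr (Or.inl ⟨hzR.2, hyL, h⟩)))
      · -- (L, L)
        rcases Llin x y z h1 h2 with h | h | h
        · exact Or.inl (Or.inr (Or.inl ⟨hyL, hzL, h⟩))
        · exact Or.inr (Or.inl h)
        · exact Or.inr (Or.inr (Or.inr (Or.inl ⟨hzL, hyL, h⟩)))
      · -- (L, B)
        exact (noBack s hs hsr x hsx hxL).elim
    · rcases hzx with ⟨hzT, hxT, h2⟩ | ⟨hzL, hxL, h2⟩ | ⟨s, hs, hsr, hzB, hsx⟩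
      · -- (B, T)
        rcases htx with htx | rfl
        · rcases Tlin x z t h2 htx with h | h | h
          · have hzB' : z ∈ B t := predB t ht hr z h
            rcases Bchain t ht hr y hyB z hzB' with h' | h' | h'
            · exact Or.inr (Or.inl h')
            · exact Or.inl (Or.inr (Or.inl ⟨BsubL t ht hr hyB, BsubL t ht hr hzB', h'⟩))
            · exact Or.inr (Or.inr (Or.inr (Or.inl ⟨BsubL t ht hr hzB', BsubL t ht hr hyB, h'⟩)))
          · exact Or.inl (Or.inr (Or.inr ⟨t, ht, hr, hyB, Or.inr h.symm⟩))
          · exact Or.inl (Or.inr (Or.inr ⟨t, ht, hr, hyB, Or.inl h⟩))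
        · have hzB' : z ∈ B t := predB t ht hr z h2
          rcases Bchain t ht hr y hyB z hzB' with h' | h' | h'
          · exact Or.inr (Or.inl h')
          · exact Or.inl (Or.inr (Or.inl ⟨BsubL t ht hr hyB, BsubL t ht hr hzB', h'⟩))
          · exact Or.inr (Or.inr (Or.inr (Or.inl ⟨BsubL t ht hr hzB', BsubL t ht hr hyB, h'⟩)))
      · -- (B, L)
        exact (noBack t ht hr x htx hxL).elim
      · -- (B, B): necessarily t = s
        have hts : t = s := by
          rcases htx with h1' | rfl <;> rcases hsx with h2' | h2'
          · rcases Tlin x t s h1' h2' with h | h | h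
            · exfalso; have := rankT t s h; omega
            · exact h
            · exfalso; have := rankT s t h; omega
          · exfalso; subst h2'; have := rankT t s h1'; omega
          · exfalso; have := rankT s t h2'; omega
          · exact h2'.symm ▸ rfl
        subst hts
        rcases Bchain t ht hr y hyB z hzB with h' | h' | h'
        · exact Or.inr (Or.inl h')
        · exact Or.inl (Or.inr (Or.inl ⟨BsubL t ht hr hyB, BsubL t ht hr hzB, h'⟩))
        · exact Or.inr (Or.inr (Or.inr (Or.inl ⟨BsubL t ht hr hzB, BsubL t ht hr hyB, h'⟩)))
end

section
/- Let F be a 2-capturing construction scheme over ω₁, and for α ∈ ω₁ define f_α : ω → ω by f_α(l) = |(α)_l|. Then the family B_F = {f_α | α ∈ ω₁}, ordered by pointwise domination ≤, contains no uncountable set of pairwise incomparable elements. -/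
/-
Write `pos E x = |E ∩ [0, x]|`. For every element `E ∈ 𝓕` of rank `l` containing `α`,
the closure `(α)_l` is `E ∩ [0, α]`, so `f_α(l) = pos E α`. Now let `F` of rank `k + 1`
capture `α < β`, with `α` in the piece `D₀` and `β` in the piece `D₁` at the same
position. The position of a point in an element determines its position in the piece of
the canonical decomposition containing it, so by descending through decompositions
`f_α(l) = f_β(l)` for `l ≤ k`. For `l > k` the points `α ≤ β` lie in a common element of
rank `l`, whence `f_α(l) ≤ f_β(l)`. Thus a captured pair is comparable, and 2-capturing
provides one inside every uncountable set.
-/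

open Set

/-- A *type* for construction schemes: a sequence `(m_k, n_{k+1}, r_{k+1})`. -/
structure CSType where
  m : ℕ → ℕ
  n : ℕ → ℕ
  r : ℕ → ℕ
  m_zero : m 0 = 1
  n_ge : ∀ k, 1 ≤ k → 2 ≤ n k
  r_inf : ∀ j N, ∃ k, N ≤ k ∧ 1 ≤ k ∧ r k = j
  r_lt : ∀ k, r (k + 1) < m k
  m_rec : ∀ k, m (k + 1) = r (k + 1) + (m k - r (k + 1)) * n (k + 1)

/-- `C` is an initial segment of `A` (written `C ⊑ A` in the paper). -/
def InitSeg (C A : Finset Ordinal) : Prop :=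
  C ⊆ A ∧ ∀ c ∈ C, ∀ d ∈ A, d ≤ c → d ∈ C

/-- `D` (with root `R`) is the canonical decomposition of `F`, an element of rank `k+1`,
into `n_{k+1}` elements of rank `k` forming a Δ-system with root `R` of size `r_{k+1}`,
with `R < D 0 \ R < ⋯ < D (n_{k+1} - 1) \ R`. -/
def CanonDecomp (τ : CSType) (𝓕 : Set (Finset Ordinal)) (k : ℕ)
    (F : Finset Ordinal) (D : Fin (τ.n (k + 1)) → Finset Ordinal)
    (R : Finset Ordinal) : Prop :=
  (∀ i, D i ∈ 𝓕 ∧ (D i).card = τ.m k) ∧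
  (∀ x, x ∈ F ↔ ∃ i, x ∈ D i) ∧
  R.card = τ.r (k + 1) ∧
  (∀ i j, i ≠ j → D i ∩ D j = R) ∧
  (∀ a ∈ R, ∀ i, ∀ b ∈ D i, b ∉ R → a < b) ∧
  (∀ i j : Fin (τ.n (k + 1)), i < j → ∀ b ∈ D i, b ∉ R → ∀ c ∈ D j, c ∉ R → b < c)

/-- `𝓕` is a construction scheme over the set of ordinals `X` of type `τ`.
Rank is measured by cardinality: an element of rank `k` has cardinality `m_k`. -/
structure IsConstructionScheme (τ : CSType) (X : Set Ordinal)
    (𝓕 : Set (Finset Ordinal)) : Prop where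
  subset_X : ∀ F ∈ 𝓕, (F : Set Ordinal) ⊆ X
  card_mem : ∀ F ∈ 𝓕, ∃ k, F.card = τ.m k
  cofinal : ∀ A : Finset Ordinal, (A : Set Ordinal) ⊆ X → ∃ F ∈ 𝓕, A ⊆ F
  initSeg : ∀ k, ∀ E ∈ 𝓕, ∀ F ∈ 𝓕, E.card = τ.m k → F.card = τ.m k →
    InitSeg (E ∩ F) E
  decomp : ∀ k, ∀ F ∈ 𝓕, F.card = τ.m (k + 1) →
    ∃! D : Fin (τ.n (k + 1)) → Finset Ordinal, ∃ R, CanonDecomp τ 𝓕 k F D R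

/-- `ρ(α,β)`: the least `k` such that some element of `𝓕` of rank `k` contains both. -/
noncomputable def csRho (τ : CSType) (𝓕 : Set (Finset Ordinal)) (α β : Ordinal) : ℕ :=
  sInf {k | ∃ F ∈ 𝓕, F.card = τ.m k ∧ α ∈ F ∧ β ∈ F}

/-- The `k`-closure `(β)_k = {α ≤ β | ρ(α,β) ≤ k}` (within `X`). -/
def csClos (τ : CSType) (𝓕 : Set (Finset Ordinal)) (X : Set Ordinal)
    (k : ℕ) (β : Ordinal) : Set Ordinal :=
  {α ∈ X | α ≤ β ∧ csRho τ 𝓕 α β ≤ k}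

/-- `Δ(α,β) = min({k | |(α)_k| ≠ |(β)_k|} ∪ {ω})`, valued in `ℕ∞` (where `⊤` plays
the role of `ω`). -/
noncomputable def csDelta (τ : CSType) (𝓕 : Set (Finset Ordinal)) (X : Set Ordinal)
    (α β : Ordinal) : ℕ∞ :=
  sInf ((fun k : ℕ => (k : ℕ∞)) ''
    {k | (csClos τ 𝓕 X k α).ncard ≠ (csClos τ 𝓕 X k β).ncard})

/-- The function `Ξ_α : ω → ω ∪ {-1}` associated to a construction scheme. -/
noncomputable def csXi (τ : CSType) (𝓕 : Set (Finset Ordinal)) (X : Set Ordinal)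
    (α : Ordinal) (k : ℕ) : ℤ :=
  if k = 0 then 0
  else if (csClos τ 𝓕 X k α).ncard ≤ τ.r k then -1
  else (((csClos τ 𝓕 X k α).ncard : ℤ) - ((csClos τ 𝓕 X (k - 1) α).ncard : ℤ)) /
    ((τ.m (k - 1) : ℤ) - (τ.r k : ℤ))

/-- `F` (of rank `k+1`) captures the pair `{α, β}`: with canonical decomposition
`D` and root `R`, `α ∈ D 0 \ R`, `β ∈ D 1 \ R`, and the increasing bijection from
`D 0` to `D 1` sends `α` to `β`. -/
def CapturesPair (τ : CSType) (𝓕 : Set (Finset Ordinal)) (k : ℕ)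
    (F : Finset Ordinal) (α β : Ordinal) : Prop :=
  F ∈ 𝓕 ∧ F.card = τ.m (k + 1) ∧
  ∃ D R, CanonDecomp τ 𝓕 k F D R ∧
    ∃ (h0 : 0 < τ.n (k + 1)) (h1 : 1 < τ.n (k + 1)),
      α ∈ D ⟨0, h0⟩ ∧ α ∉ R ∧ β ∈ D ⟨1, h1⟩ ∧ β ∉ R ∧
      ((D ⟨0, h0⟩ : Set Ordinal) ∩ Set.Iic α).ncard =
        ((D ⟨1, h1⟩ : Set Ordinal) ∩ Set.Iic β).ncard

/-- `𝓕` is 2-capturing: for every uncountable `S ⊆ X` and every `k₀` there are a pair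
`{α, β} ∈ [S]²` and `F ∈ 𝓕` of rank `l > k₀` capturing it. -/
def TwoCapturing (τ : CSType) (X : Set Ordinal) (𝓕 : Set (Finset Ordinal)) : Prop :=
  ∀ S : Set Ordinal, S ⊆ X → ¬ S.Countable → ∀ k₀ : ℕ,
    ∃ k, k₀ ≤ k ∧ ∃ F α β, α ∈ S ∧ β ∈ S ∧ α < β ∧ CapturesPair τ 𝓕 k F α β

section

variable {τ : CSType} {𝓕 : Set (Finset Ordinal)} {X : Set Ordinal}

theorem CSType.m_strictMono (τ : CSType) : StrictMono τ.m := by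
  refine strictMono_nat_of_lt_succ fun k => ?_
  have hrec := τ.m_rec k
  have hr := τ.r_lt k
  have hn : (τ.m k - τ.r (k + 1)) * 2 ≤ (τ.m k - τ.r (k + 1)) * τ.n (k + 1) :=
    Nat.mul_le_mul_left _ (τ.n_ge (k + 1) (by omega))
  omega

theorem CSType.m_pos (τ : CSType) (k : ℕ) : 0 < τ.m k := by
  have := τ.m_strictMono.monotone (Nat.zero_le k)
  have := τ.m_zero
  omega

theorem ncard_coe_inter_Iic {α : Type*} [LinearOrder α] (E : Finset α) (x : α) :
    ((E : Set α) ∩ Set.Iic x).ncard = (E.filter (· ≤ x)).card := by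
  rw [← Set.ncard_coe_finset, Finset.coe_filter]
  rfl

/-- The position, within a piece of the canonical decomposition of an element of rank
`k + 1`, of the point at position `p` of the element: the root comes first, followed by the
non-root parts of the pieces, in consecutive blocks of `m_k - r_{k+1}` points. -/
def CSType.posInPiece (τ : CSType) (k p : ℕ) : ℕ :=
  if p ≤ τ.r (k + 1) then p
  else (p - τ.r (k + 1) - 1) % (τ.m k - τ.r (k + 1)) + τ.r (k + 1) + 1

namespace CanonDecomp

variable {k : ℕ} {E R : Finset Ordinal} {D : Fin (τ.n (k + 1)) → Finset Ordinal}
  {x : Ordinal} {i : Fin (τ.n (k + 1))}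

theorem root_subset (hcd : CanonDecomp τ 𝓕 k E D R) (i : Fin (τ.n (k + 1))) : R ⊆ D i := by
  have : Nontrivial (Fin (τ.n (k + 1))) :=
    Fin.nontrivial_iff_two_le.mpr (τ.n_ge (k + 1) (by omega))
  obtain ⟨j, hj⟩ := exists_ne i
  rw [← hcd.2.2.2.1 j i hj]
  exact Finset.inter_subset_right

theorem subset (hcd : CanonDecomp τ 𝓕 k E D R) (i : Fin (τ.n (k + 1))) : D i ⊆ E :=
  fun y hy => (hcd.2.1 y).2 ⟨i, hy⟩

theorem disjoint_sdiff_root (hcd : CanonDecomp τ 𝓕 k E D R) {j : Fin (τ.n (k + 1))}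
    (hij : i ≠ j) : Disjoint (D i \ R) (D j) := by
  rw [Finset.disjoint_left]
  intro y hy hyj
  exact (Finset.mem_sdiff.mp hy).2
    (hcd.2.2.2.1 i j hij ▸ Finset.mem_inter.mpr ⟨(Finset.mem_sdiff.mp hy).1, hyj⟩)

theorem filter_le_subset_root (hcd : CanonDecomp τ 𝓕 k E D R) (hx : x ∈ R) :
    E.filter (· ≤ x) ⊆ R := by
  intro y hy
  obtain ⟨hyE, hyx⟩ := Finset.mem_filter.mp hy
  obtain ⟨t, hyt⟩ := (hcd.2.1 y).1 hyE
  by_contra hyR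
  exact (hcd.2.2.2.2.1 x hx t y hyt hyR).not_ge hyx

theorem r_lt_card_filter_le (hcd : CanonDecomp τ 𝓕 k E D R) (hx : x ∈ D i) (hxR : x ∉ R) :
    τ.r (k + 1) < ((D i).filter (· ≤ x)).card := by
  have hsub : insert x R ⊆ (D i).filter (· ≤ x) := by
    intro y hy
    rcases Finset.mem_insert.mp hy with rfl | hyR
    · exact Finset.mem_filter.mpr ⟨hx, le_rfl⟩
    · exact Finset.mem_filter.mpr ⟨hcd.root_subset i hyR, (hcd.2.2.2.2.1 y hyR i x hx hxR).le⟩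
  calc τ.r (k + 1) < (insert x R).card := by
        rw [Finset.card_insert_of_notMem hxR, hcd.2.2.1]; omega
    _ ≤ _ := Finset.card_le_card hsub

theorem filter_le_eq (hcd : CanonDecomp τ 𝓕 k E D R) (hx : x ∈ D i) (hxR : x ∉ R) :
    E.filter (· ≤ x) = (Finset.Iio i).biUnion (fun t => D t \ R) ∪ (D i).filter (· ≤ x) := by
  ext y
  simp only [Finset.mem_union, Finset.mem_filter, Finset.mem_biUnion, Finset.mem_Iio,
    Finset.mem_sdiff]
  constructor
  · rintro ⟨hyE, hyx⟩
    obtain ⟨t, hyt⟩ := (hcd.2.1 y).1 hyE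
    by_cases hyR : y ∈ R
    · exact Or.inr ⟨hcd.root_subset i hyR, hyx⟩
    rcases lt_trichotomy t i with hti | rfl | hit
    · exact Or.inl ⟨t, hti, hyt, hyR⟩
    · exact Or.inr ⟨hyt, hyx⟩
    · exact absurd hyx (hcd.2.2.2.2.2 i t hit x hx hxR y hyt hyR).not_ge
  · rintro (⟨t, hti, hyt, hyR⟩ | ⟨hyi, hyx⟩)
    · exact ⟨hcd.subset t hyt, (hcd.2.2.2.2.2 t i hti y hyt hyR x hx hxR).le⟩
    · exact ⟨hcd.subset i hyi, hyx⟩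

theorem card_biUnion_sdiff_root (hcd : CanonDecomp τ 𝓕 k E D R) (i : Fin (τ.n (k + 1))) :
    ((Finset.Iio i).biUnion (fun t => D t \ R)).card = i * (τ.m k - τ.r (k + 1)) := by
  rw [Finset.card_biUnion fun s _ t _ hst =>
      (hcd.disjoint_sdiff_root hst).mono_right Finset.sdiff_subset]
  have hblock : ∀ t ∈ Finset.Iio i, (D t \ R).card = τ.m k - τ.r (k + 1) := fun t _ => by
    rw [Finset.card_sdiff_of_subset (hcd.root_subset t), (hcd.1 t).2, hcd.2.2.1]
  rw [Finset.sum_congr rfl hblock, Finset.sum_const, smul_eq_mul, Fin.card_Iio]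

theorem card_filter_le (hcd : CanonDecomp τ 𝓕 k E D R) (hx : x ∈ D i) (hxR : x ∉ R) :
    (E.filter (· ≤ x)).card = i * (τ.m k - τ.r (k + 1)) + ((D i).filter (· ≤ x)).card := by
  have hdisj : Disjoint ((Finset.Iio i).biUnion (fun t => D t \ R)) ((D i).filter (· ≤ x)) :=
    (Finset.disjoint_biUnion_left _ _ _).mpr fun t ht =>
      (hcd.disjoint_sdiff_root (Finset.mem_Iio.mp ht).ne).mono_right (Finset.filter_subset _ _)
  rw [hcd.filter_le_eq hx hxR, Finset.card_union_of_disjoint hdisj, hcd.card_biUnion_sdiff_root]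

theorem exists_card_filter_le_eq_posInPiece (hcd : CanonDecomp τ 𝓕 k E D R) (hx : x ∈ E) :
    ∃ i, x ∈ D i ∧
      ((D i).filter (· ≤ x)).card = τ.posInPiece k (E.filter (· ≤ x)).card := by
  by_cases hxR : x ∈ R
  · have hn : 0 < τ.n (k + 1) := by have := τ.n_ge (k + 1) (by omega); omega
    have hsub := hcd.filter_le_subset_root hxR
    have hpiece : E.filter (· ≤ x) = (D ⟨0, hn⟩).filter (· ≤ x) :=
      (Finset.filter_subset_filter _ (hcd.subset _)).antisymm' fun y hy =>
        Finset.mem_filter.mpr ⟨hcd.root_subset _ (hsub hy), (Finset.mem_filter.mp hy).2⟩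
    have hle : (E.filter (· ≤ x)).card ≤ τ.r (k + 1) :=
      hcd.2.2.1 ▸ Finset.card_le_card hsub
    refine ⟨⟨0, hn⟩, hcd.root_subset _ hxR, ?_⟩
    rw [CSType.posInPiece, if_pos hle, hpiece]
  · obtain ⟨i, hxi⟩ := (hcd.2.1 x).1 hx
    refine ⟨i, hxi, ?_⟩
    have hlo := hcd.r_lt_card_filter_le hxi hxR
    have hhi : ((D i).filter (· ≤ x)).card ≤ τ.m k :=
      (hcd.1 i).2 ▸ Finset.card_le_card (Finset.filter_subset _ _)
    have hr := τ.r_lt k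
    rw [CSType.posInPiece, hcd.card_filter_le hxi hxR, if_neg (by omega)]
    -- position `i * b + s` with `r < s ≤ r + b`, where `b = m_k - r_{k+1}`
    set b := τ.m k - τ.r (k + 1)
    set s := ((D i).filter (· ≤ x)).card
    have hsb : s - τ.r (k + 1) - 1 < b := by omega
    rw [show (i : ℕ) * b + s - τ.r (k + 1) - 1 = s - τ.r (k + 1) - 1 + i * b by omega,
      Nat.add_mul_mod_self_right, Nat.mod_eq_of_lt hsb]
    omega

end CanonDecomp

namespace IsConstructionScheme

theorem exists_subset_mem_of_le (hCS : IsConstructionScheme τ X 𝓕) {l k : ℕ} (hkl : k ≤ l)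
    {F : Finset Ordinal} (hF : F ∈ 𝓕) (hFc : F.card = τ.m l) {x : Ordinal} (hx : x ∈ F) :
    ∃ P ∈ 𝓕, P.card = τ.m k ∧ x ∈ P ∧ P ⊆ F := by
  induction l generalizing F with
  | zero => exact ⟨F, hF, Nat.le_zero.mp hkl ▸ hFc, hx, subset_rfl⟩
  | succ j ih =>
    rcases hkl.eq_or_lt with rfl | hlt
    · exact ⟨F, hF, hFc, hx, subset_rfl⟩
    obtain ⟨D, ⟨R, hcd⟩, -⟩ := hCS.decomp j F hF hFc
    obtain ⟨i, hxi⟩ := (hcd.2.1 x).1 hx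
    obtain ⟨P, hP, hPc, hxP, hPD⟩ := ih (Nat.lt_succ_iff.mp hlt) (hcd.1 i).1 (hcd.1 i).2 hxi
    exact ⟨P, hP, hPc, hxP, hPD.trans (hcd.subset i)⟩

theorem csClos_eq (hCS : IsConstructionScheme τ X 𝓕) {l : ℕ} {F : Finset Ordinal}
    (hF : F ∈ 𝓕) (hFc : F.card = τ.m l) {β : Ordinal} (hβ : β ∈ F) :
    csClos τ 𝓕 X l β = ↑F ∩ Set.Iic β := by
  ext γ
  constructor
  · rintro ⟨hγX, hγβ, hρ⟩
    have hne : {k | ∃ E ∈ 𝓕, E.card = τ.m k ∧ γ ∈ E ∧ β ∈ E}.Nonempty := by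
      obtain ⟨E, hE, hγβE⟩ := hCS.cofinal {γ, β} (by
        rw [Finset.coe_pair]
        exact Set.insert_subset hγX (Set.singleton_subset_iff.mpr (hCS.subset_X F hF hβ)))
      obtain ⟨k, hk⟩ := hCS.card_mem E hE
      exact ⟨k, E, hE, hk, hγβE (by simp), hγβE (by simp)⟩
    obtain ⟨E, hE, hEc, hγE, hβE⟩ := Nat.sInf_mem hne
    obtain ⟨P, hP, hPc, hβP, hPF⟩ := hCS.exists_subset_mem_of_le hρ hF hFc hβ
    -- `E ∩ P` is an initial segment of `E` containing `β`
    have hγEP := (hCS.initSeg _ E hE P hP hEc hPc).2 β (Finset.mem_inter.mpr ⟨hβE, hβP⟩) γ hγE hγβ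
    exact ⟨hPF (Finset.mem_inter.mp hγEP).2, hγβ⟩
  · rintro ⟨hγF, hγβ⟩
    exact ⟨hCS.subset_X F hF hγF, hγβ, Nat.sInf_le ⟨F, hF, hFc, hγF, hβ⟩⟩

theorem ncard_csClos (hCS : IsConstructionScheme τ X 𝓕) {l : ℕ} {F : Finset Ordinal}
    (hF : F ∈ 𝓕) (hFc : F.card = τ.m l) {β : Ordinal} (hβ : β ∈ F) :
    (csClos τ 𝓕 X l β).ncard = (F.filter (· ≤ β)).card := by
  rw [hCS.csClos_eq hF hFc hβ, ncard_coe_inter_Iic]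

theorem exists_superset (hCS : IsConstructionScheme τ X 𝓕) (hX : X.Infinite) {k l : ℕ}
    (hkl : k ≤ l) {G : Finset Ordinal} (hG : G ∈ 𝓕) (hGc : G.card = τ.m k) :
    ∃ H ∈ 𝓕, H.card = τ.m l ∧ G ⊆ H := by
  obtain ⟨N, hNX, hNc⟩ := hX.exists_subset_card_eq (τ.m l + 1)
  obtain ⟨F, hF, hGNF⟩ := hCS.cofinal (G ∪ N)
    (by rw [Finset.coe_union]; exact Set.union_subset (hCS.subset_X G hG) hNX)
  obtain ⟨l', hl'⟩ := hCS.card_mem F hF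
  have hll' : l ≤ l' := by
    have : τ.m l < τ.m l' := calc
      τ.m l < N.card := by omega
      _ ≤ F.card := Finset.card_le_card (Finset.subset_union_right.trans hGNF)
      _ = τ.m l' := hl'
    exact (τ.m_strictMono.lt_iff_lt.mp this).le
  have hG₀ : G.Nonempty := Finset.card_pos.mp (hGc ▸ τ.m_pos k)
  have hxF : G.max' hG₀ ∈ F := hGNF (Finset.mem_union_left N (G.max'_mem hG₀))
  obtain ⟨H, hH, hHc, hxH, hHF⟩ := hCS.exists_subset_mem_of_le hll' hF hl' hxF
  obtain ⟨P, hP, hPc, hxP, hPH⟩ := hCS.exists_subset_mem_of_le hkl hH hHc hxH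
  -- `G ∩ P` is an initial segment of `G` containing the maximum of `G`
  have hseg := (hCS.initSeg k G hG P hP hGc hPc).2 _
    (Finset.mem_inter.mpr ⟨G.max'_mem hG₀, hxP⟩)
  exact ⟨H, hH, hHc, fun y hy => hPH (Finset.mem_inter.mp (hseg y hy (G.le_max' y hy))).2⟩

theorem ncard_csClos_mono (hCS : IsConstructionScheme τ X 𝓕) (hX : X.Infinite) {k l : ℕ}
    (hkl : k ≤ l) {E : Finset Ordinal} (hE : E ∈ 𝓕) (hEc : E.card = τ.m k)
    {α β : Ordinal} (hα : α ∈ E) (hβ : β ∈ E) (hαβ : α ≤ β) :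
    (csClos τ 𝓕 X l α).ncard ≤ (csClos τ 𝓕 X l β).ncard := by
  obtain ⟨H, hH, hHc, hEH⟩ := hCS.exists_superset hX hkl hE hEc
  rw [hCS.csClos_eq hH hHc (hEH hα), hCS.csClos_eq hH hHc (hEH hβ)]
  exact Set.ncard_le_ncard (Set.inter_subset_inter_right _ (Set.Iic_subset_Iic.mpr hαβ))
    (H.finite_toSet.inter_of_left _)

theorem ncard_csClos_eq_of_card_filter_le_eq (hCS : IsConstructionScheme τ X 𝓕) {k l : ℕ}
    (hlk : l ≤ k) {E₀ E₁ : Finset Ordinal} (hE₀ : E₀ ∈ 𝓕) (hE₁ : E₁ ∈ 𝓕)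
    (hE₀c : E₀.card = τ.m k) (hE₁c : E₁.card = τ.m k) {α β : Ordinal} (hα : α ∈ E₀)
    (hβ : β ∈ E₁) (hpos : (E₀.filter (· ≤ α)).card = (E₁.filter (· ≤ β)).card) :
    (csClos τ 𝓕 X l α).ncard = (csClos τ 𝓕 X l β).ncard := by
  induction k generalizing E₀ E₁ α β with
  | zero =>
    rw [Nat.le_zero.mp hlk, hCS.ncard_csClos hE₀ hE₀c hα, hCS.ncard_csClos hE₁ hE₁c hβ, hpos]
  | succ j ih =>
    rcases hlk.eq_or_lt with rfl | hlt
    · rw [hCS.ncard_csClos hE₀ hE₀c hα, hCS.ncard_csClos hE₁ hE₁c hβ, hpos]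
    obtain ⟨D₀, ⟨R₀, hcd₀⟩, -⟩ := hCS.decomp j E₀ hE₀ hE₀c
    obtain ⟨D₁, ⟨R₁, hcd₁⟩, -⟩ := hCS.decomp j E₁ hE₁ hE₁c
    obtain ⟨i₀, hαi, hpos₀⟩ := hcd₀.exists_card_filter_le_eq_posInPiece hα
    obtain ⟨i₁, hβi, hpos₁⟩ := hcd₁.exists_card_filter_le_eq_posInPiece hβ
    exact ih (Nat.lt_succ_iff.mp hlt) (hcd₀.1 i₀).1 (hcd₁.1 i₁).1 (hcd₀.1 i₀).2 (hcd₁.1 i₁).2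
      hαi hβi (by rw [hpos₀, hpos₁, hpos])

end IsConstructionScheme

theorem CapturesPair.ncard_csClos_le (hCS : IsConstructionScheme τ X 𝓕) (hX : X.Infinite)
    {k : ℕ} {F : Finset Ordinal} {α β : Ordinal} (hcap : CapturesPair τ 𝓕 k F α β) (l : ℕ) :
    (csClos τ 𝓕 X l α).ncard ≤ (csClos τ 𝓕 X l β).ncard := by
  obtain ⟨hF, hFc, D, R, hcd, h0, h1, hαD, hαR, hβD, hβR, hpos⟩ := hcap
  rcases le_or_gt l k with hlk | hkl
  · rw [ncard_coe_inter_Iic, ncard_coe_inter_Iic] at hpos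
    exact (hCS.ncard_csClos_eq_of_card_filter_le_eq hlk (hcd.1 _).1 (hcd.1 _).1 (hcd.1 _).2
      (hcd.1 _).2 hαD hβD hpos).le
  · exact hCS.ncard_csClos_mono hX hkl hF hFc (hcd.subset _ hαD) (hcd.subset _ hβD)
      (hcd.2.2.2.2.2 _ _ (Fin.mk_lt_mk.mpr zero_lt_one) α hαD hαR β hβD hβR).le

end

/-- For a 2-capturing construction scheme over `ω₁`, the family
`B_𝓕 = {f_α}` with `f_α(l) = |(α)_l|`, ordered by pointwise domination, contains
no uncountable set of pairwise incomparable elements. -/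
theorem stmt17 (τ : CSType) (𝓕 : Set (Finset Ordinal))
    (hCS : IsConstructionScheme τ (Set.Iio (Ordinal.omega 1)) 𝓕)
    (hcap : TwoCapturing τ (Set.Iio (Ordinal.omega 1)) 𝓕) :
    ¬ ∃ S : Set Ordinal, S ⊆ (Set.Iio (Ordinal.omega 1)) ∧ ¬ S.Countable ∧
      ∀ α ∈ S, ∀ β ∈ S, α ≠ β →
        ¬ (∀ l : ℕ, (csClos τ 𝓕 (Set.Iio (Ordinal.omega 1)) l α).ncard ≤
            (csClos τ 𝓕 (Set.Iio (Ordinal.omega 1)) l β).ncard) ∧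
        ¬ (∀ l : ℕ, (csClos τ 𝓕 (Set.Iio (Ordinal.omega 1)) l β).ncard ≤
            (csClos τ 𝓕 (Set.Iio (Ordinal.omega 1)) l α).ncard) := by
  rintro ⟨S, hSX, hS, hincomp⟩
  have hX : (Set.Iio (Ordinal.omega 1)).Infinite := fun hfin => hS (hfin.subset hSX).countable
  obtain ⟨k, -, F, α, β, hα, hβ, hαβ, hFαβ⟩ := hcap S hSX hS 0
  exact (hincomp α hα β hβ hαβ.ne).1 (hFαβ.ncard_csClos_le hCS hX)
end

section
/- Assume there exists a coloring o : [ω₁]² → ω such that for every uncountable family A of pairwise disjoint finite subsets of ω₁ all of the same size n, and every m ∈ ω, there are a < b in A with o(α,β) = m for all α ∈ a, β ∈ b. Then the countable chain condition (ccc) is not productive: there exist two ccc partial orders whose product is not ccc. -/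
open Set

/-- The poset `P_n` of finite `o`-monochromatic (with color `n`) subsets of `ω₁`,
ordered by reverse inclusion. -/
def Pcol (o : Ordinal → Ordinal → ℕ) (n : ℕ) : Set (Finset Ordinal) :=
  {p | (p : Set Ordinal) ⊆ (Set.Iio (Ordinal.omega 1)) ∧
    ∀ α ∈ p, ∀ β ∈ p, α ≠ β → o α β = n}

/-- Compatibility in a poset of finite sets ordered by reverse inclusion. -/
def CompatIn (P : Set (Finset Ordinal)) (p q : Finset Ordinal) : Prop :=
  ∃ r ∈ P, p ⊆ r ∧ q ⊆ r

/-- The countable chain condition for a poset of finite sets ordered by reverse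
inclusion: every antichain is countable. -/
def CccIn (P : Set (Finset Ordinal)) : Prop :=
  ∀ A : Set (Finset Ordinal), A ⊆ P →
    (∀ p ∈ A, ∀ q ∈ A, p ≠ q → ¬ CompatIn P p q) → A.Countable

lemma deltaSystem : ∀ (n : ℕ) (A : Set (Finset Ordinal)), ¬ A.Countable →
    (∀ a ∈ A, a.card = n) →
    ∃ (R : Finset Ordinal) (A' : Set (Finset Ordinal)), A' ⊆ A ∧ ¬ A'.Countable ∧
      ∀ a ∈ A', ∀ b ∈ A', a ≠ b → a ∩ b = R := by
  intro n
  induction n with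
  | zero =>
    intro A hA hcard
    exact absurd ((Set.countable_singleton (∅ : Finset Ordinal)).mono
      (fun a ha => by simp [Finset.card_eq_zero.mp (hcard a ha)])) hA
  | succ n ih =>
    intro A hA hcard
    have hzorn : ∀ c ⊆ {D : Set (Finset Ordinal) | D ⊆ A ∧ ∀ a ∈ D, ∀ b ∈ D, a ≠ b → Disjoint a b},
        IsChain (· ⊆ ·) c → ∃ ub ∈ {D | D ⊆ A ∧ ∀ a ∈ D, ∀ b ∈ D, a ≠ b → Disjoint a b},
          ∀ s ∈ c, s ⊆ ub := by
      intro c hc hchain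
      refine ⟨⋃₀ c, ⟨?_, ?_⟩, fun s hs => Set.subset_sUnion_of_mem hs⟩
      · exact Set.sUnion_subset (fun s hs => (hc hs).1)
      · rintro a ⟨s, hs, has⟩ b ⟨t, ht, hbt⟩ hab
        rcases hchain.total hs ht with h | h
        · exact (hc ht).2 a (h has) b hbt hab
        · exact (hc hs).2 a has b (h hbt) hab
    obtain ⟨D, hDmem, hDmax⟩ := zorn_subset
        {D | D ⊆ A ∧ ∀ a ∈ D, ∀ b ∈ D, a ≠ b → Disjoint a b} hzorn
    obtain ⟨hDA, hDdisj⟩ := hDmem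
    by_cases hD : D.Countable
    · -- countable maximal disjoint family
      set S : Set Ordinal := ⋃ d ∈ D, (d : Set Ordinal) with hSdef
      have hS : S.Countable := hD.biUnion (fun d _ => d.countable_toSet)
      have hmeet : ∀ a ∈ A, ∃ x ∈ S, x ∈ a := by
        intro a ha
        have hne : a.Nonempty := Finset.card_pos.mp (by rw [hcard a ha]; omega)
        by_cases haD : a ∈ D
        · obtain ⟨x, hx⟩ := hne
          exact ⟨x, Set.mem_biUnion haD hx, hx⟩
        · by_contra hcon
          push_neg at hcon
          have hdisj : ∀ d ∈ D, Disjoint a d := by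
            intro d hd
            rw [Finset.disjoint_left]
            intro x hxa hxd
            exact absurd hxa (hcon x (Set.mem_biUnion hd hxd))
          have hins : insert a D ∈ {D | D ⊆ A ∧ ∀ a ∈ D, ∀ b ∈ D, a ≠ b → Disjoint a b} := by
            refine ⟨Set.insert_subset ha hDA, ?_⟩
            intro x hx y hy hxy
            rcases hx with rfl | hx
            · rcases hy with rfl | hy
              · exact absurd rfl hxy
              · exact hdisj y hy
            · rcases hy with rfl | hy
              · exact (hdisj x hx).symm
              · exact hDdisj x hx y hy hxy
          have : insert a D ⊆ D := hDmax hins (Set.subset_insert a D)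
          exact haD (this (Set.mem_insert a D))
      have hfib : ∃ x, ¬ {a ∈ A | x ∈ a}.Countable := by
        by_contra h
        push_neg at h
        refine hA ((hS.biUnion (fun x _ => h x)).mono ?_)
        intro a ha
        obtain ⟨x, hxS, hxa⟩ := hmeet a ha
        exact Set.mem_biUnion hxS ⟨ha, hxa⟩
      obtain ⟨x, hx⟩ := hfib
      set A1 : Set (Finset Ordinal) := {a ∈ A | x ∈ a} with hA1def
      have hinj : Set.InjOn (fun a => a.erase x) A1 := by
        intro a ha b hb h
        simp only at h
        rw [← Finset.insert_erase ha.2, h, Finset.insert_erase hb.2]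
      set B := (fun a => a.erase x) '' A1 with hBdef
      have hB : ¬ B.Countable := fun h =>
        hx (Set.countable_of_injective_of_countable_image hinj h)
      have hcardB : ∀ b ∈ B, b.card = n := by
        rintro b ⟨a, ha, rfl⟩
        rw [Finset.card_erase_of_mem ha.2, hcard a ha.1]
        omega
      obtain ⟨R', B', hB'sub, hB'unc, hB'int⟩ := ih B hB hcardB
      refine ⟨insert x R', {a ∈ A1 | a.erase x ∈ B'}, fun a ha => ha.1.1, ?_, ?_⟩
      · intro h
        refine hB'unc (((h.image (fun a => a.erase x))).mono ?_)
        rintro b hb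
        obtain ⟨a, ha, rfl⟩ := hB'sub hb
        exact ⟨a, ⟨ha, hb⟩, rfl⟩
      · rintro a ⟨ha1, haB⟩ b ⟨hb1, hbB⟩ hab
        have hxe : a.erase x ≠ b.erase x := fun h => hab (hinj ha1 hb1 h)
        have := hB'int _ haB _ hbB hxe
        ext y
        simp only [Finset.mem_inter, Finset.mem_insert, ← this, Finset.mem_erase]
        by_cases hyx : y = x
        · subst hyx; simp [ha1.2, hb1.2]
        · simp [hyx]
    · exact ⟨∅, D, hDA, hD, fun a ha b hb hne =>
        Finset.disjoint_iff_inter_eq_empty.mp (hDdisj a ha b hb hne)⟩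

lemma ccc_aux (o : Ordinal → Ordinal → ℕ)
    (hsymm : ∀ α β, o α β = o β α)
    (ho : ∀ (n : ℕ) (A : Set (Finset Ordinal)), ¬ A.Countable →
      (∀ a ∈ A, (a : Set Ordinal) ⊆ (Set.Iio (Ordinal.omega 1)) ∧ a.card = n) →
      (∀ a ∈ A, ∀ b ∈ A, a ≠ b → Disjoint a b) →
      ∀ m : ℕ, ∃ a ∈ A, ∃ b ∈ A, a ≠ b ∧ (∀ α ∈ a, ∀ β ∈ b, α < β) ∧
        ∀ α ∈ a, ∀ β ∈ b, o α β = m) (n0 : ℕ) : CccIn (Pcol o n0) := by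
  intro A hAP hanti
  by_contra hA
  have hk : ∃ k, ¬ {a ∈ A | a.card = k}.Countable := by
    by_contra h
    push_neg at h
    refine hA ((Set.countable_iUnion h).mono ?_)
    exact fun a ha => Set.mem_iUnion.mpr ⟨a.card, ha, rfl⟩
  obtain ⟨k, hk⟩ := hk
  obtain ⟨R, A', hA'sub, hA'unc, hint⟩ := deltaSystem k _ hk (fun a ha => ha.2)
  have hA'inf : A'.Infinite := fun h => hA'unc h.countable
  have hRsub : ∀ a ∈ A', R ⊆ a := by
    intro a ha
    obtain ⟨b, hb, hba⟩ := hA'inf.exists_notMem_finite (Set.finite_singleton a)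
    rw [← hint b hb a ha (by simpa using hba)]
    exact Finset.inter_subset_right
  have hinj : Set.InjOn (fun a => a \ R) A' := by
    intro a ha b hb h
    simp only at h
    rw [← Finset.sdiff_union_of_subset (hRsub a ha), h,
      Finset.sdiff_union_of_subset (hRsub b hb)]
  set B := (fun a => a \ R) '' A' with hBdef
  have hBunc : ¬ B.Countable := fun h =>
    hA'unc (Set.countable_of_injective_of_countable_image hinj h)
  have hmemA : ∀ a ∈ A', a ∈ A := fun a ha => (hA'sub ha).1
  have hcardB : ∀ b ∈ B, (b : Set Ordinal) ⊆ (Set.Iio (Ordinal.omega 1)) ∧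
      b.card = k - R.card := by
    rintro b ⟨a, ha, rfl⟩
    constructor
    · exact fun y hy => (hAP (hmemA a ha)).1 (by simpa using (Finset.mem_sdiff.mp (by simpa using hy)).1)
    · rw [Finset.card_sdiff_of_subset (hRsub a ha), (hA'sub ha).2]
  have hdisjB : ∀ b1 ∈ B, ∀ b2 ∈ B, b1 ≠ b2 → Disjoint b1 b2 := by
    rintro b1 ⟨a1, ha1, rfl⟩ b2 ⟨a2, ha2, rfl⟩ hne
    have ha12 : a1 ≠ a2 := fun h => hne (by rw [h])
    rw [Finset.disjoint_left]
    intro y hy1 hy2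
    rw [Finset.mem_sdiff] at hy1 hy2
    have : y ∈ a1 ∩ a2 := Finset.mem_inter.mpr ⟨hy1.1, hy2.1⟩
    rw [hint a1 ha1 a2 ha2 ha12] at this
    exact hy1.2 this
  obtain ⟨b1, hb1, b2, hb2, hbne, hlt, hcol⟩ := ho (k - R.card) B hBunc hcardB hdisjB n0
  obtain ⟨a1, ha1, rfl⟩ := hb1
  obtain ⟨a2, ha2, rfl⟩ := hb2
  simp only at hbne hcol
  have ha12 : a1 ≠ a2 := fun h => hbne (by rw [h])
  refine hanti a1 (hmemA a1 ha1) a2 (hmemA a2 ha2) ha12 ⟨a1 ∪ a2, ⟨?_, ?_⟩,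
    Finset.subset_union_left, Finset.subset_union_right⟩
  · intro y hy
    rcases Finset.mem_union.mp (by simpa using hy) with h | h
    · exact (hAP (hmemA a1 ha1)).1 (by simpa using h)
    · exact (hAP (hmemA a2 ha2)).1 (by simpa using h)
  · have key : ∀ α ∈ a1, ∀ β ∈ a2, α ∉ a2 → β ∉ a1 → o α β = n0 := by
      intro α hα β hβ hα2 hβ1
      refine hcol α (Finset.mem_sdiff.mpr ⟨hα, fun h => hα2 (hRsub a2 ha2 h)⟩)
        β (Finset.mem_sdiff.mpr ⟨hβ, fun h => hβ1 (hRsub a1 ha1 h)⟩)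
    intro α hα β hβ hne
    rcases Finset.mem_union.mp hα with h1 | h1 <;> rcases Finset.mem_union.mp hβ with h2 | h2
    · exact (hAP (hmemA a1 ha1)).2 α h1 β h2 hne
    · by_cases hα2 : α ∈ a2
      · exact (hAP (hmemA a2 ha2)).2 α hα2 β h2 hne
      · by_cases hβ1 : β ∈ a1
        · exact (hAP (hmemA a1 ha1)).2 α h1 β hβ1 hne
        · exact key α h1 β h2 hα2 hβ1
    · by_cases hα1 : α ∈ a1
      · exact (hAP (hmemA a1 ha1)).2 α hα1 β h2 hne
      · by_cases hβ2 : β ∈ a2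
        · exact (hAP (hmemA a2 ha2)).2 α h1 β hβ2 hne
        · exact (hsymm α β).trans (key β h2 α h1 hβ2 hα1)
    · exact (hAP (hmemA a2 ha2)).2 α h1 β h2 hne

universe u
lemma Iio_omega1_uncountable : ¬ (Set.Iio (Ordinal.omega.{u} 1)).Countable := by
  intro h
  have h1 := Cardinal.le_aleph0_iff_set_countable.mpr h
  rw [Ordinal.mk_Iio_ordinal, Ordinal.card_omega, ← Cardinal.lift_aleph0.{u + 1, u},
    Cardinal.lift_le] at h1
  exact absurd h1 (not_le.mpr Cardinal.aleph0_lt_aleph_one)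


/-- If there is a coloring `o : [ω₁]² → ω` such that for every
uncountable family `A` of pairwise disjoint finite subsets of `ω₁` of the same
size and every `m` there are `a < b` in `A` with `o(α,β) = m` for all `α ∈ a`,
`β ∈ b`, then ccc is not productive: `P_0` and `P_1` are ccc but their product
has an uncountable antichain. -/
theorem stmt18 (o : Ordinal → Ordinal → ℕ)
    (hsymm : ∀ α β, o α β = o β α)
    (ho : ∀ (n : ℕ) (A : Set (Finset Ordinal)), ¬ A.Countable →
      (∀ a ∈ A, (a : Set Ordinal) ⊆ (Set.Iio (Ordinal.omega 1)) ∧ a.card = n) →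
      (∀ a ∈ A, ∀ b ∈ A, a ≠ b → Disjoint a b) →
      ∀ m : ℕ, ∃ a ∈ A, ∃ b ∈ A, a ≠ b ∧ (∀ α ∈ a, ∀ β ∈ b, α < β) ∧
        ∀ α ∈ a, ∀ β ∈ b, o α β = m) :
    CccIn (Pcol o 0) ∧ CccIn (Pcol o 1) ∧
    ∃ A : Set (Finset Ordinal × Finset Ordinal),
      (∀ x ∈ A, x.1 ∈ Pcol o 0 ∧ x.2 ∈ Pcol o 1) ∧ ¬ A.Countable ∧
      ∀ x ∈ A, ∀ y ∈ A, x ≠ y →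
        ¬ (CompatIn (Pcol o 0) x.1 y.1 ∧ CompatIn (Pcol o 1) x.2 y.2) := by
  refine ⟨ccc_aux o hsymm ho 0, ccc_aux o hsymm ho 1, ?_⟩
  refine ⟨(fun α => (({α} : Finset Ordinal), ({α} : Finset Ordinal))) ''
    (Set.Iio (Ordinal.omega 1)), ?_, ?_, ?_⟩
  · rintro x ⟨α, hα, rfl⟩
    exact ⟨⟨by simpa using hα, by simp⟩, ⟨by simpa using hα, by simp⟩⟩
  · intro h
    refine Iio_omega1_uncountable (Set.countable_of_injective_of_countable_image ?_ h)
    intro α _ β _ h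
    simpa using congrArg Prod.fst h
  · rintro x ⟨α, hα, rfl⟩ y ⟨β, hβ, rfl⟩ hxy ⟨⟨r0, hr0, hαr0, hβr0⟩, ⟨r1, hr1, hαr1, hβr1⟩⟩
    have hne : α ≠ β := fun h => hxy (by rw [h])
    have h0 : o α β = 0 := hr0.2 α (hαr0 (by simp)) β (hβr0 (by simp)) hne
    have h1 : o α β = 1 := hr1.2 α (hαr1 (by simp)) β (hβr1 (by simp)) hne
    omega
end

section
/- Let F be a 2-capturing construction scheme over ω₁ and define the coloring c : [ω₁]² → 2 by c(α,β) = 1 if Δ(α,β) = ρ(α,β) and c(α,β) = 0 otherwise. Then c witnesses ω₁ ↛ (ω₁, ω+2)²₂: there is no uncountable 0-monochromatic set, and there is no 1-monochromatic set of order type ω+2. -/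
open Set

section CSAux

variable {τ : CSType} {X : Set Ordinal} {𝓕 : Set (Finset Ordinal)}

/-- position of `x` in `E`: number of elements of `E` that are `≤ x`. -/
noncomputable def cpos (E : Finset Ordinal) (x : Ordinal) : ℕ := (E.filter (fun y => y ≤ x)).card

lemma coh (hCS : IsConstructionScheme τ X 𝓕) {k : ℕ} {E F : Finset Ordinal}
    (hE : E ∈ 𝓕) (hF : F ∈ 𝓕) (hEc : E.card = τ.m k) (hFc : F.card = τ.m k)
    {γ x : Ordinal} (hγE : γ ∈ E) (hγF : γ ∈ F) (hxE : x ∈ E) (hx : x ≤ γ) : x ∈ F := by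
  have h := hCS.initSeg k E hE F hF hEc hFc
  have := h.2 γ (Finset.mem_inter.2 ⟨hγE, hγF⟩) x hxE hx
  exact (Finset.mem_inter.1 this).2

lemma mem_piece (hCS : IsConstructionScheme τ X 𝓕) {k : ℕ} {F : Finset Ordinal}
    (hF : F ∈ 𝓕) (hc : F.card = τ.m (k + 1)) {γ : Ordinal} (hγ : γ ∈ F) :
    ∃ E ∈ 𝓕, E.card = τ.m k ∧ γ ∈ E ∧ E ⊆ F := by
  obtain ⟨D, ⟨R, hD⟩, -⟩ := hCS.decomp k F hF hc
  obtain ⟨i, hi⟩ := (hD.2.1 γ).1 hγ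
  exact ⟨D i, (hD.1 i).1, (hD.1 i).2, hi, fun x hx => (hD.2.1 x).2 ⟨i, hx⟩⟩

lemma descend (hCS : IsConstructionScheme τ X 𝓕) :
    ∀ k j, j ≤ k → ∀ F ∈ 𝓕, F.card = τ.m k → ∀ γ ∈ F,
      ∃ E ∈ 𝓕, E.card = τ.m j ∧ γ ∈ E ∧ E ⊆ F := by
  intro k
  induction k with
  | zero => intro j hj F hF hc γ hγ; interval_cases j; exact ⟨F, hF, hc, hγ, subset_rfl⟩
  | succ k ih =>
    intro j hj F hF hc γ hγ
    rcases Nat.eq_or_lt_of_le hj with h | h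
    · exact ⟨F, hF, h ▸ hc, hγ, subset_rfl⟩
    · obtain ⟨E, hE, hEc, hγE, hEF⟩ := mem_piece hCS hF hc hγ
      obtain ⟨G, hG, hGc, hγG, hGE⟩ := ih j (Nat.lt_succ_iff.1 h) E hE hEc γ hγE
      exact ⟨G, hG, hGc, hγG, hGE.trans hEF⟩

/-- If `γ` belongs to `E` of rank `k` and to `E'` of rank `j ≤ k`, then everything in
`E'` below `γ` belongs to `E`. -/
lemma L1 (hCS : IsConstructionScheme τ X 𝓕) :
    ∀ k j, j ≤ k → ∀ E ∈ 𝓕, E.card = τ.m k → ∀ E' ∈ 𝓕, E'.card = τ.m j →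
      ∀ γ, γ ∈ E → γ ∈ E' → ∀ x ∈ E', x ≤ γ → x ∈ E := by
  intro k
  induction k with
  | zero =>
    intro j hj E hE hEc E' hE' hE'c γ hγE hγE' x hx hxγ
    interval_cases j
    exact coh hCS hE' hE hE'c hEc hγE' hγE hx hxγ
  | succ k ih =>
    intro j hj E hE hEc E' hE' hE'c γ hγE hγE' x hx hxγ
    rcases Nat.eq_or_lt_of_le hj with h | h
    · exact coh hCS hE' hE (h ▸ hE'c) hEc hγE' hγE hx hxγ
    · obtain ⟨G, hG, hGc, hγG, hGE⟩ := mem_piece hCS hE hEc hγE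
      exact hGE (ih j (Nat.lt_succ_iff.1 h) G hG hGc E' hE' hE'c γ hγG hγE' x hx hxγ)

lemma rho_le {k : ℕ} {E : Finset Ordinal} (hE : E ∈ 𝓕) (hc : E.card = τ.m k)
    {α β : Ordinal} (hα : α ∈ E) (hβ : β ∈ E) : csRho τ 𝓕 α β ≤ k :=
  Nat.sInf_le ⟨E, hE, hc, hα, hβ⟩

lemma rho_witness (hCS : IsConstructionScheme τ X 𝓕) {α β : Ordinal}
    (hα : α ∈ X) (hβ : β ∈ X) :
    ∃ E ∈ 𝓕, E.card = τ.m (csRho τ 𝓕 α β) ∧ α ∈ E ∧ β ∈ E := by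
  have hne : {k | ∃ F ∈ 𝓕, F.card = τ.m k ∧ α ∈ F ∧ β ∈ F}.Nonempty := by
    obtain ⟨F, hF, hsub⟩ := hCS.cofinal {α, β} (by
      intro x hx
      simp only [Finset.coe_insert, Finset.coe_singleton, Set.mem_insert_iff,
        Set.mem_singleton_iff] at hx
      rcases hx with rfl | rfl <;> assumption)
    obtain ⟨k, hk⟩ := hCS.card_mem F hF
    exact ⟨k, F, hF, hk, hsub (by simp), hsub (by simp)⟩
  exact Nat.sInf_mem hne

lemma clos_eq (hCS : IsConstructionScheme τ X 𝓕) {k : ℕ} {E : Finset Ordinal}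
    (hE : E ∈ 𝓕) (hc : E.card = τ.m k) {γ : Ordinal} (hγ : γ ∈ E) :
    csClos τ 𝓕 X k γ = (E : Set Ordinal) ∩ Set.Iic γ := by
  ext x
  constructor
  · rintro ⟨hxX, hxγ, hρ⟩
    obtain ⟨E', hE', hE'c, hxE', hγE'⟩ := rho_witness hCS hxX (hCS.subset_X E hE hγ)
    exact ⟨L1 hCS k _ hρ E hE hc E' hE' hE'c γ hγ hγE' x hxE' hxγ, hxγ⟩
  · rintro ⟨hxE, hxγ⟩
    exact ⟨hCS.subset_X E hE hxE, hxγ, rho_le hE hc hxE hγ⟩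

lemma clos_ncard (hCS : IsConstructionScheme τ X 𝓕) {k : ℕ} {E : Finset Ordinal}
    (hE : E ∈ 𝓕) (hc : E.card = τ.m k) {γ : Ordinal} (hγ : γ ∈ E) :
    (csClos τ 𝓕 X k γ).ncard = cpos E γ := by
  rw [clos_eq hCS hE hc hγ]
  have : (E : Set Ordinal) ∩ Set.Iic γ = ((E.filter (fun y => y ≤ γ) : Finset Ordinal) : Set Ordinal) := by
    ext x; simp [Set.mem_Iic, and_comm]
  rw [this, Set.ncard_coe_finset]
  rfl


lemma decomp_root_sub {k : ℕ} {F : Finset Ordinal} {D : Fin (τ.n (k + 1)) → Finset Ordinal}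
    {R : Finset Ordinal} (hn : 2 ≤ τ.n (k + 1)) (hD : CanonDecomp τ 𝓕 k F D R)
    (i : Fin (τ.n (k + 1))) : R ⊆ D i := by
  obtain ⟨hD1, hD2, hD3, hD4, hD5, hD6⟩ := hD
  have h1 : (1 : ℕ) < τ.n (k + 1) := by omega
  have h0 : (0 : ℕ) < τ.n (k + 1) := by omega
  by_cases h : (i : ℕ) = 0
  · have hne : i ≠ ⟨1, h1⟩ := by intro he; rw [he] at h; simp at h
    rw [← hD4 i ⟨1, h1⟩ hne]; exact Finset.inter_subset_left
  · have hne : i ≠ ⟨0, h0⟩ := by intro he; rw [he] at h; simp at h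
    rw [← hD4 i ⟨0, h0⟩ hne]; exact Finset.inter_subset_left

lemma decomp_pos_root {k : ℕ} {F : Finset Ordinal} {D : Fin (τ.n (k + 1)) → Finset Ordinal}
    {R : Finset Ordinal} (hn : 2 ≤ τ.n (k + 1)) (hD : CanonDecomp τ 𝓕 k F D R)
    {x : Ordinal} (hxR : x ∈ R) (i : Fin (τ.n (k + 1))) :
    cpos (D i) x = cpos F x ∧ cpos F x ≤ τ.r (k + 1) := by
  have hRsub := decomp_root_sub hn hD
  obtain ⟨hD1, hD2, hD3, hD4, hD5, hD6⟩ := hD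
  have hflt : F.filter (fun y => y ≤ x) = R.filter (fun y => y ≤ x) := by
    ext y
    simp only [Finset.mem_filter]
    constructor
    · rintro ⟨hyF, hyx⟩
      refine ⟨?_, hyx⟩
      by_contra hyR
      obtain ⟨i'', hi''⟩ := (hD2 y).1 hyF
      exact absurd hyx (not_le.2 (hD5 x hxR i'' y hi'' hyR))
    · rintro ⟨hyR, hyx⟩
      exact ⟨(hD2 y).2 ⟨i, hRsub i hyR⟩, hyx⟩
  have hdlt : (D i).filter (fun y => y ≤ x) = R.filter (fun y => y ≤ x) := by
    ext y
    simp only [Finset.mem_filter]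
    constructor
    · rintro ⟨hyD, hyx⟩
      refine ⟨?_, hyx⟩
      by_contra hyR
      exact absurd hyx (not_le.2 (hD5 x hxR i y hyD hyR))
    · rintro ⟨hyR, hyx⟩
      exact ⟨hRsub i hyR, hyx⟩
  constructor
  · unfold cpos; rw [hflt, hdlt]
  · unfold cpos
    rw [hflt, ← hD3]
    exact Finset.card_le_card (Finset.filter_subset _ _)

lemma decomp_pos_nonroot {k : ℕ} {F : Finset Ordinal} {D : Fin (τ.n (k + 1)) → Finset Ordinal}
    {R : Finset Ordinal} (hn : 2 ≤ τ.n (k + 1)) (hD : CanonDecomp τ 𝓕 k F D R)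
    {x : Ordinal} (hxF : x ∈ F) (hxR : x ∉ R) :
    ∃ i, x ∈ D i ∧
      cpos F x = τ.r (k + 1) + (i : ℕ) * (τ.m k - τ.r (k + 1)) + cpos ((D i) \ R) x ∧
      cpos (D i) x = τ.r (k + 1) + cpos ((D i) \ R) x ∧
      1 ≤ cpos ((D i) \ R) x ∧ cpos ((D i) \ R) x ≤ τ.m k - τ.r (k + 1) := by
  have hRsub := decomp_root_sub hn hD
  obtain ⟨hD1, hD2, hD3, hD4, hD5, hD6⟩ := hD
  obtain ⟨i, hxDi⟩ := (hD2 x).1 hxF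
  have hBcard : ∀ i', ((D i') \ R).card = τ.m k - τ.r (k + 1) := by
    intro i'
    rw [Finset.card_sdiff_of_subset (hRsub i'), (hD1 i').2, hD3]
  have hBdisj : ∀ i' j', i' ≠ j' → Disjoint ((D i') \ R) ((D j') \ R) := by
    intro i' j' hne
    rw [Finset.disjoint_left]
    intro a ha hb
    rw [Finset.mem_sdiff] at ha hb
    exact ha.2 (by rw [← hD4 i' j' hne]; exact Finset.mem_inter.2 ⟨ha.1, hb.1⟩)
  have hq1 : 1 ≤ cpos ((D i) \ R) x := by
    refine Finset.card_pos.2 ⟨x, ?_⟩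
    simp [Finset.mem_sdiff, hxDi, hxR]
  have hqs : cpos ((D i) \ R) x ≤ τ.m k - τ.r (k + 1) := by
    rw [← hBcard i]
    exact Finset.card_le_card (Finset.filter_subset _ _)
  have hdi : (D i).filter (fun y => y ≤ x) = R ∪ ((D i) \ R).filter (fun y => y ≤ x) := by
    ext y
    simp only [Finset.mem_filter, Finset.mem_union, Finset.mem_sdiff]
    constructor
    · rintro ⟨hyD, hyx⟩
      by_cases hyR : y ∈ R
      · exact Or.inl hyR
      · exact Or.inr ⟨⟨hyD, hyR⟩, hyx⟩
    · rintro (hyR | ⟨⟨hyD, _⟩, hyx⟩)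
      · exact ⟨hRsub i hyR, le_of_lt (hD5 y hyR i x hxDi hxR)⟩
      · exact ⟨hyD, hyx⟩
  have hdisj1 : Disjoint R (((D i) \ R).filter (fun y => y ≤ x)) := by
    rw [Finset.disjoint_left]
    intro a ha hb
    rw [Finset.mem_filter, Finset.mem_sdiff] at hb
    exact hb.1.2 ha
  have hposDi : cpos (D i) x = τ.r (k + 1) + cpos ((D i) \ R) x := by
    unfold cpos
    rw [hdi, Finset.card_union_of_disjoint hdisj1, hD3]
  -- the big decomposition of F.filter (≤ x)
  set U : Finset (Fin (τ.n (k + 1))) := Finset.univ.filter (fun j => j < i) with hU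
  have hUcard : U.card = (i : ℕ) := by
    have : U = Finset.Iio i := by
      ext j; simp [hU, Finset.mem_Iio]
    rw [this, Fin.card_Iio]
  have hfl : F.filter (fun y => y ≤ x) =
      (R ∪ U.biUnion (fun i' => (D i') \ R)) ∪ ((D i) \ R).filter (fun y => y ≤ x) := by
    ext y
    simp only [Finset.mem_filter, Finset.mem_union, Finset.mem_biUnion, Finset.mem_sdiff, hU,
      Finset.mem_filter, Finset.mem_univ, true_and]
    constructor
    · rintro ⟨hyF, hyx⟩
      by_cases hyR : y ∈ R
      · exact Or.inl (Or.inl hyR)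
      · obtain ⟨i'', hi''⟩ := (hD2 y).1 hyF
        rcases lt_trichotomy i'' i with hlt | heq | hgt
        · exact Or.inl (Or.inr ⟨i'', hlt, hi'', hyR⟩)
        · subst heq; exact Or.inr ⟨⟨hi'', hyR⟩, hyx⟩
        · exact absurd hyx (not_le.2 (hD6 i i'' hgt x hxDi hxR y hi'' hyR))
    · rintro ((hyR | ⟨i', hlt, hyD, hyR⟩) | ⟨⟨hyD, hyR⟩, hyx⟩)
      · exact ⟨(hD2 y).2 ⟨i, hRsub i hyR⟩, le_of_lt (hD5 y hyR i x hxDi hxR)⟩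
      · exact ⟨(hD2 y).2 ⟨i', hyD⟩, le_of_lt (hD6 i' i hlt y hyD hyR x hxDi hxR)⟩
      · exact ⟨(hD2 y).2 ⟨i, hyD⟩, hyx⟩
  have hdisjU : Disjoint R (U.biUnion (fun i' => (D i') \ R)) := by
    rw [Finset.disjoint_left]
    intro a ha hb
    rw [Finset.mem_biUnion] at hb
    obtain ⟨i', _, hb⟩ := hb
    exact (Finset.mem_sdiff.1 hb).2 ha
  have hdisj2 : Disjoint (R ∪ U.biUnion (fun i' => (D i') \ R))
      (((D i) \ R).filter (fun y => y ≤ x)) := by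
    rw [Finset.disjoint_left]
    intro a ha hb
    rw [Finset.mem_filter, Finset.mem_sdiff] at hb
    rw [Finset.mem_union] at ha
    rcases ha with ha | ha
    · exact hb.1.2 ha
    · rw [Finset.mem_biUnion] at ha
      obtain ⟨i', hi'U, ha⟩ := ha
      have hne : i' ≠ i := by
        simp only [hU, Finset.mem_filter] at hi'U
        exact ne_of_lt hi'U.2
      exact Finset.disjoint_left.1 (hBdisj i' i hne) ha (Finset.mem_sdiff.2 hb.1)
  have hbiU : (U.biUnion (fun i' => (D i') \ R)).card = (i : ℕ) * (τ.m k - τ.r (k + 1)) := by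
    rw [Finset.card_biUnion (fun i' _ j' _ hne => hBdisj i' j' hne)]
    rw [Finset.sum_congr rfl (fun i' _ => hBcard i'), Finset.sum_const, smul_eq_mul, hUcard]
  have hposF : cpos F x = τ.r (k + 1) + (i : ℕ) * (τ.m k - τ.r (k + 1)) + cpos ((D i) \ R) x := by
    unfold cpos
    rw [hfl, Finset.card_union_of_disjoint hdisj2, Finset.card_union_of_disjoint hdisjU,
      hD3, hbiU]
  exact ⟨i, hxDi, hposF, hposDi, hq1, hqs⟩

lemma euclid_aux (s i i' q q' : ℕ) (hs : 0 < s) (hq : 1 ≤ q) (hqs : q ≤ s)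
    (hq' : 1 ≤ q') (hq's : q' ≤ s) (h : i * s + q = i' * s + q') : q = q' := by
  have h1 : i * s + (q - 1) = i' * s + (q' - 1) := by omega
  have h2 : (i * s + (q - 1)) % s = q - 1 := by
    rw [Nat.add_comm, Nat.add_mul_mod_self_right]; exact Nat.mod_eq_of_lt (by omega)
  have h3 : (i' * s + (q' - 1)) % s = q' - 1 := by
    rw [Nat.add_comm, Nat.add_mul_mod_self_right]; exact Nat.mod_eq_of_lt (by omega)
  have h4 : (i * s + (q - 1)) % s = (i' * s + (q' - 1)) % s := by rw [h1]
  omega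

/-- Main transfer lemma: elements in the same position in same-rank members of the
scheme have, for each `j ≤ k`, rank-`j` members around them in the same position. -/
lemma L2 (hCS : IsConstructionScheme τ X 𝓕) :
    ∀ k, ∀ E ∈ 𝓕, ∀ E' ∈ 𝓕, E.card = τ.m k → E'.card = τ.m k →
      ∀ x ∈ E, ∀ x' ∈ E', cpos E x = cpos E' x' → ∀ j ≤ k,
      ∃ G ∈ 𝓕, ∃ G' ∈ 𝓕, G.card = τ.m j ∧ G'.card = τ.m j ∧ x ∈ G ∧ x' ∈ G' ∧
        cpos G x = cpos G' x' := by
  intro k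
  induction k with
  | zero =>
    intro E hE E' hE' hEc hE'c x hx x' hx' hpos j hj
    interval_cases j
    exact ⟨E, hE, E', hE', hEc, hE'c, hx, hx', hpos⟩
  | succ k ih =>
    intro E hE E' hE' hEc hE'c x hx x' hx' hpos j hj
    rcases Nat.eq_or_lt_of_le hj with h | h
    · exact ⟨E, hE, E', hE', h ▸ hEc, h ▸ hE'c, hx, hx', hpos⟩
    · have hjk : j ≤ k := Nat.lt_succ_iff.1 h
      have hn : 2 ≤ τ.n (k + 1) := τ.n_ge (k + 1) (by omega)
      obtain ⟨D, ⟨R, hD⟩, -⟩ := hCS.decomp k E hE hEc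
      obtain ⟨D', ⟨R', hD'⟩, -⟩ := hCS.decomp k E' hE' hE'c
      by_cases hxR : x ∈ R
      · have hx'R' : x' ∈ R' := by
          by_contra hx'R'
          obtain ⟨i', _, hposE', _, hq1, _⟩ := decomp_pos_nonroot hn hD' hx' hx'R'
          have := (decomp_pos_root hn hD hxR ⟨0, by omega⟩).2
          omega
        have i0 : Fin (τ.n (k + 1)) := ⟨0, by omega⟩
        have hA := decomp_pos_root hn hD hxR ⟨0, by omega⟩
        have hA' := decomp_pos_root hn hD' hx'R' ⟨0, by omega⟩
        refine ih (D ⟨0, by omega⟩) (hD.1 _).1 (D' ⟨0, by omega⟩) (hD'.1 _).1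
          (hD.1 _).2 (hD'.1 _).2 x (decomp_root_sub hn hD _ hxR) x'
          (decomp_root_sub hn hD' _ hx'R') ?_ j hjk
        rw [hA.1, hA'.1, hpos]
      · have hx'R' : x' ∉ R' := by
          intro hx'R'
          obtain ⟨i, _, hposE, _, hq1, _⟩ := decomp_pos_nonroot hn hD hx hxR
          have := (decomp_pos_root hn hD' hx'R' ⟨0, by omega⟩).2
          omega
        obtain ⟨i, hxDi, hposE, hposDi, hq1, hqs⟩ := decomp_pos_nonroot hn hD hx hxR
        obtain ⟨i', hx'Di', hposE', hposDi', hq1', hqs'⟩ :=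
          decomp_pos_nonroot hn hD' hx' hx'R'
        have hs : 0 < τ.m k - τ.r (k + 1) := by have := τ.r_lt k; omega
        have hqq : cpos ((D i) \ R) x = cpos ((D' i') \ R') x' := by
          refine euclid_aux (τ.m k - τ.r (k + 1)) i i' _ _ hs hq1 hqs hq1' hqs' ?_
          omega
        refine ih (D i) (hD.1 i).1 (D' i') (hD'.1 i').1 (hD.1 i).2 (hD'.1 i').2
          x hxDi x' hx'Di' ?_ j hjk
        rw [hposDi, hposDi', hqq]

lemma ncard_inter_Iic (E : Finset Ordinal) (x : Ordinal) :
    ((E : Set Ordinal) ∩ Set.Iic x).ncard = cpos E x := by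
  have : (E : Set Ordinal) ∩ Set.Iic x
      = ((E.filter (fun y => y ≤ x) : Finset Ordinal) : Set Ordinal) := by
    ext y; simp [Set.mem_Iic, and_comm]
  rw [this, Set.ncard_coe_finset]
  rfl

lemma delta_eq_of {a b : Ordinal} {n : ℕ}
    (h1 : (csClos τ 𝓕 X n a).ncard ≠ (csClos τ 𝓕 X n b).ncard)
    (h2 : ∀ j < n, (csClos τ 𝓕 X j a).ncard = (csClos τ 𝓕 X j b).ncard) :
    csDelta τ 𝓕 X a b = (n : ℕ∞) := by
  refine IsLeast.csInf_eq ⟨⟨n, h1, rfl⟩, ?_⟩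
  rintro y ⟨j, hj, rfl⟩
  show (n : ℕ∞) ≤ (j : ℕ∞)
  exact_mod_cast not_lt.1 (fun hlt => hj (h2 j hlt))

lemma delta_spec {a b : Ordinal} {n : ℕ} (h : csDelta τ 𝓕 X a b = (n : ℕ∞)) :
    (csClos τ 𝓕 X n a).ncard ≠ (csClos τ 𝓕 X n b).ncard ∧
    ∀ j < n, (csClos τ 𝓕 X j a).ncard = (csClos τ 𝓕 X j b).ncard := by
  set N := {k | (csClos τ 𝓕 X k a).ncard ≠ (csClos τ 𝓕 X k b).ncard} with hN
  have hne : N.Nonempty := by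
    by_contra hc
    rw [Set.not_nonempty_iff_eq_empty] at hc
    unfold csDelta at h
    rw [← hN, hc, Set.image_empty, sInf_empty] at h
    exact absurd h.symm (by simp)
  have hmem : sInf N ∈ N := Nat.sInf_mem hne
  have heq : csDelta τ 𝓕 X a b = ((sInf N : ℕ) : ℕ∞) := by
    refine delta_eq_of hmem ?_
    intro j hj
    by_contra hc
    exact absurd (Nat.sInf_le (show j ∈ N from hc)) (by omega)
  rw [heq] at h
  have : (n : ℕ) = sInf N := by exact_mod_cast h.symm
  subst this
  exact ⟨hmem, fun j hj => by
    by_contra hc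
    exact absurd (Nat.sInf_le (show j ∈ N from hc)) (by omega)⟩

lemma delta_le_of_mem {a b : Ordinal} {k : ℕ}
    (h : (csClos τ 𝓕 X k a).ncard ≠ (csClos τ 𝓕 X k b).ncard) :
    csDelta τ 𝓕 X a b ≤ (k : ℕ∞) :=
  sInf_le ⟨k, h, rfl⟩

lemma delta_symm (a b : Ordinal) : csDelta τ 𝓕 X a b = csDelta τ 𝓕 X b a := by
  unfold csDelta
  have : {k | (csClos τ 𝓕 X k a).ncard ≠ (csClos τ 𝓕 X k b).ncard} =
      {k | (csClos τ 𝓕 X k b).ncard ≠ (csClos τ 𝓕 X k a).ncard} := by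
    ext k; exact ne_comm
  rw [this]

/-- Δ-comparison: if `Δ(a,b) < Δ(b,c)` then `Δ(a,c) = Δ(a,b)`. -/
lemma delta_comp {a b c : Ordinal} {n : ℕ} (hab : csDelta τ 𝓕 X a b = (n : ℕ∞))
    (hlt : ((n : ℕ∞)) < csDelta τ 𝓕 X b c) : csDelta τ 𝓕 X a c = (n : ℕ∞) := by
  obtain ⟨h1, h2⟩ := delta_spec hab
  have hbc : ∀ k ≤ n, (csClos τ 𝓕 X k b).ncard = (csClos τ 𝓕 X k c).ncard := by
    intro k hk
    by_contra hc
    have := delta_le_of_mem (a := b) (b := c) hc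
    have hkn : ((k : ℕ∞)) ≤ (n : ℕ∞) := by exact_mod_cast hk
    exact absurd (this.trans hkn) (not_le.2 hlt)
  refine delta_eq_of ?_ ?_
  · rw [← hbc n le_rfl]; exact h1
  · intro j hj
    rw [← hbc j (le_of_lt hj)]; exact h2 j hj

lemma clos_finite (hCS : IsConstructionScheme τ X 𝓕) {k : ℕ} {β : Ordinal}
    (hβ : β ∈ X) : (csClos τ 𝓕 X k β).Finite := by
  classical
  have main : csClos τ 𝓕 X k β ⊆ ⋃ j ∈ Finset.range (k + 1),
      (if h : ∃ E, E ∈ 𝓕 ∧ E.card = τ.m j ∧ β ∈ E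
        then (h.choose : Set Ordinal) else ∅) := by
    rintro x ⟨hxX, hxβ, hρ⟩
    obtain ⟨E, hE, hEc, hxE, hβE⟩ := rho_witness hCS hxX hβ
    have hj : csRho τ 𝓕 x β ∈ Finset.range (k + 1) := Finset.mem_range.2 (by omega)
    refine Set.mem_biUnion hj ?_
    have hex : ∃ E, E ∈ 𝓕 ∧ E.card = τ.m (csRho τ 𝓕 x β) ∧ β ∈ E := ⟨E, hE, hEc, hβE⟩
    rw [dif_pos hex]
    obtain ⟨hE', hE'c, hβE'⟩ := hex.choose_spec
    exact coh hCS hE hE' hEc hE'c hβE hβE' hxE hxβ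
  refine Set.Finite.subset ?_ main
  refine Set.Finite.biUnion (Finset.range (k + 1)).finite_toSet (fun j _ => ?_)
  split_ifs
  · exact Finset.finite_toSet _
  · exact Set.finite_empty

/-- If `F` captures `{α, β}` then `Δ(α,β) = ρ(α,β) = k+1`. -/
lemma captures_delta_rho (hCS : IsConstructionScheme τ X 𝓕) {k : ℕ} {F : Finset Ordinal}
    {α β : Ordinal} (hαβ : α < β) (hc : CapturesPair τ 𝓕 k F α β) :
    csDelta τ 𝓕 X α β = ((k + 1 : ℕ) : ℕ∞) ∧ csRho τ 𝓕 α β = k + 1 := by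
  obtain ⟨hF, hFc, D, R, hD, h0, h1, hα0, hαR, hβ1, hβR, hpos⟩ := hc
  have hn : 2 ≤ τ.n (k + 1) := τ.n_ge (k + 1) (by omega)
  have hαF : α ∈ F := (hD.2.1 α).2 ⟨_, hα0⟩
  have hβF : β ∈ F := (hD.2.1 β).2 ⟨_, hβ1⟩
  have hαX : α ∈ X := hCS.subset_X F hF hαF
  have hβX : β ∈ X := hCS.subset_X F hF hβF
  have hD0 := hD.1 ⟨0, h0⟩
  have hD1 := hD.1 ⟨1, h1⟩
  -- ρ(α,β) = k+1
  have hrho_le : csRho τ 𝓕 α β ≤ k + 1 := rho_le hF hFc hαF hβF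
  have hrho : csRho τ 𝓕 α β = k + 1 := by
    rcases Nat.eq_or_lt_of_le hrho_le with h | h
    · exact h
    · exfalso
      have hjk : csRho τ 𝓕 α β ≤ k := by omega
      obtain ⟨E, hE, hEc, hαE, hβE⟩ := rho_witness hCS hαX hβX
      have hαD1 : α ∈ D ⟨1, h1⟩ :=
        L1 hCS k _ hjk _ hD1.1 hD1.2 E hE hEc β hβ1 hβE α hαE (le_of_lt hαβ)
      have hne : (⟨0, h0⟩ : Fin (τ.n (k + 1))) ≠ ⟨1, h1⟩ := by
        intro hcon; simpa using congrArg Fin.val hcon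
      have : α ∈ R := by
        rw [← hD.2.2.2.1 _ _ hne]; exact Finset.mem_inter.2 ⟨hα0, hαD1⟩
      exact hαR this
  -- Δ(α,β) = k+1
  have hcpos : cpos (D ⟨0, h0⟩) α = cpos (D ⟨1, h1⟩) β := by
    rw [← ncard_inter_Iic, ← ncard_inter_Iic]; exact hpos
  have hdelta : csDelta τ 𝓕 X α β = ((k + 1 : ℕ) : ℕ∞) := by
    refine delta_eq_of ?_ ?_
    · rw [clos_ncard hCS hF hFc hαF, clos_ncard hCS hF hFc hβF]
      have hsub : F.filter (fun y => y ≤ α) ⊂ F.filter (fun y => y ≤ β) := by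
        refine ⟨fun y hy => ?_, ?_⟩
        · rw [Finset.mem_filter] at hy ⊢
          exact ⟨hy.1, le_trans hy.2 (le_of_lt hαβ)⟩
        intro hcon
        have hβmem : β ∈ F.filter (fun y => y ≤ β) := Finset.mem_filter.2 ⟨hβF, le_refl β⟩
        have := (Finset.mem_filter.1 (hcon hβmem)).2
        exact absurd this (not_le.2 hαβ)
      exact Nat.ne_of_lt (Finset.card_lt_card hsub)
    · intro j hj
      obtain ⟨G, hG, G', hG', hGc, hG'c, hαG, hβG', hGpos⟩ :=
        L2 hCS k _ hD0.1 _ hD1.1 hD0.2 hD1.2 α hα0 β hβ1 hcpos j (by omega)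
      rw [clos_ncard hCS hG hGc hαG, clos_ncard hCS hG' hG'c hβG', hGpos]
  exact ⟨hdelta, hrho⟩

end CSAux

/-- For a 2-capturing construction scheme over `ω₁`, the coloring
`c(α,β) = 1` iff `Δ(α,β) = ρ(α,β)` witnesses `ω₁ ↛ (ω₁, ω+2)²₂`: there is no
uncountable 0-monochromatic set and no 1-monochromatic set of order type `ω + 2`. -/
theorem stmt19 (τ : CSType) (𝓕 : Set (Finset Ordinal))
    (hCS : IsConstructionScheme τ (Set.Iio (Ordinal.omega 1)) 𝓕)
    (hcap : TwoCapturing τ (Set.Iio (Ordinal.omega 1)) 𝓕) :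
    (¬ ∃ S : Set Ordinal, S ⊆ (Set.Iio (Ordinal.omega 1)) ∧ ¬ S.Countable ∧
      ∀ α ∈ S, ∀ β ∈ S, α < β →
        csDelta τ 𝓕 (Set.Iio (Ordinal.omega 1)) α β ≠ (csRho τ 𝓕 α β : ℕ∞)) ∧
    (¬ ∃ (g : ℕ → Ordinal) (β γ : Ordinal), StrictMono g ∧
      (∀ i, g i < β) ∧ β < γ ∧ γ ∈ (Set.Iio (Ordinal.omega 1)) ∧
      (∀ i j : ℕ, i < j →
        csDelta τ 𝓕 (Set.Iio (Ordinal.omega 1)) (g i) (g j) = (csRho τ 𝓕 (g i) (g j) : ℕ∞)) ∧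
      (∀ i, csDelta τ 𝓕 (Set.Iio (Ordinal.omega 1)) (g i) β = (csRho τ 𝓕 (g i) β : ℕ∞)) ∧
      (∀ i, csDelta τ 𝓕 (Set.Iio (Ordinal.omega 1)) (g i) γ = (csRho τ 𝓕 (g i) γ : ℕ∞)) ∧
      csDelta τ 𝓕 (Set.Iio (Ordinal.omega 1)) β γ = (csRho τ 𝓕 β γ : ℕ∞)) := by
  constructor
  · rintro ⟨S, hSX, hSc, hS⟩
    obtain ⟨k, -, F, α, β, hαS, hβS, hαβ, hcapt⟩ := hcap S hSX hSc 0
    obtain ⟨hd, hr⟩ := captures_delta_rho hCS hαβ hcapt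
    exact hS α hαS β hβS hαβ (by rw [hd, hr])
  · rintro ⟨g, β, γ, hg, hgβ, hβγ, hγX, -, hgβh, hgγh, hβγh⟩
    rw [Set.mem_Iio] at hγX
    have hβX : β ∈ Set.Iio (Ordinal.omega 1) := Set.mem_Iio.2 (lt_trans hβγ hγX)
    set n := csRho τ 𝓕 β γ with hn
    have hfin := (clos_finite hCS (k := n) hβX).union
      (clos_finite hCS (k := n) (Set.mem_Iio.2 hγX))
    have hex : ∃ i, g i ∉ csClos τ 𝓕 (Set.Iio (Ordinal.omega 1)) n β ∪
        csClos τ 𝓕 (Set.Iio (Ordinal.omega 1)) n γ := by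
      by_contra hcon
      push_neg at hcon
      have hsub : Set.range g ⊆ _ := Set.range_subset_iff.2 hcon
      exact (Set.infinite_range_of_injective hg.injective) (hfin.subset hsub)
    obtain ⟨i, hi⟩ := hex
    have hgiβ : g i < β := hgβ i
    have hgiγ : g i < γ := lt_trans hgiβ hβγ
    have hgiX : g i ∈ Set.Iio (Ordinal.omega 1) := Set.mem_Iio.2 (lt_trans hgiγ hγX)
    rw [Set.mem_union, not_or] at hi
    have hρβ : n < csRho τ 𝓕 (g i) β := by
      by_contra hc
      exact hi.1 ⟨hgiX, le_of_lt hgiβ, not_lt.1 hc⟩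
    have hργ : n < csRho τ 𝓕 (g i) γ := by
      by_contra hc
      exact hi.2 ⟨hgiX, le_of_lt hgiγ, not_lt.1 hc⟩
    have hγβ : csDelta τ 𝓕 (Set.Iio (Ordinal.omega 1)) γ β = (n : ℕ∞) := by
      rw [delta_symm]; exact hβγh
    have hlt : ((n : ℕ∞)) < csDelta τ 𝓕 (Set.Iio (Ordinal.omega 1)) β (g i) := by
      rw [delta_symm, hgβh i]
      exact_mod_cast hρβ
    have hfinal := delta_comp hγβ hlt
    rw [delta_symm, hgγh i] at hfinal
    have : csRho τ 𝓕 (g i) γ = n := by exact_mod_cast hfinal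
    omega
end
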